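/- arXiv:1204.6484 — 3 statements merged into one kernel-verified Lean document; each statement's English description precedes it below -/
import Mathlib

section
/- Let x ∈ {0,1}^n and let E : ({0,1}^n → {0,1}) → {0,1} be the long code of x, i.e., E(f) = f(x) for every function f. Let h : {0,1}^n → {0,1} and b ∈ {0,1} with h(x) ≠ b, and let D be any string indexed by functions that is folded over (h,b), meaning D(f + h) = D(f) + b for all f (addition mod 2 pointwise on functions and mod 2 on bits). Then D and E differ on at least half of all 2^(2^n) coordinates. -/
/-!
Translation by `h` is a bijection of the coordinates that carries every coordinate where `D`
agrees with the long code `E` of `x` to one where they disagree: if `D f = f x` then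
`D (f + h) = f x + b`, whereas `E (f + h) = f x + h x`, and `h x ≠ b`. So the disagreements
are at least as many as the agreements.
-/

open Finset

theorem Finset.card_le_two_mul_card_filter_of_injective {α : Type*} [Fintype α]
    (p : α → Prop) [DecidablePred p] (σ : α → α) (hσ : Function.Injective σ)
    (hmaps : ∀ a, ¬p a → p (σ a)) :
    Fintype.card α ≤ 2 * (univ.filter p).card := by
  have hle : (univ.filter (¬p ·)).card ≤ (univ.filter p).card :=
    card_le_card_of_injOn σ (fun a ha => by simp_all) hσ.injOn
  have hsum := card_filter_add_card_filter_not (s := (univ : Finset α)) p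
  rw [card_univ] at hsum
  omega

theorem ne_eval_add_of_folded {X R : Type*} [AddGroup R] {x : X} {h : X → R} {b : R}
    {D : (X → R) → R} (hb : h x ≠ b) (hD : ∀ f, D (f + h) = D f + b) {f : X → R}
    (hf : D f = f x) : D (f + h) ≠ (f + h) x := by
  rw [hD, hf, Pi.add_apply]
  exact fun heq => hb (add_left_cancel heq).symm

theorem longcode_folded_far_general (n : ℕ) (x : Fin n → ZMod 2)
    (h : (Fin n → ZMod 2) → ZMod 2) (b : ZMod 2)
    (D : ((Fin n → ZMod 2) → ZMod 2) → ZMod 2)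
    (hb : h x ≠ b)
    (hD : ∀ f : (Fin n → ZMod 2) → ZMod 2, D (f + h) = D f + b) :
    Fintype.card ((Fin n → ZMod 2) → ZMod 2) ≤
      2 * (Finset.univ.filter
        (fun f : (Fin n → ZMod 2) → ZMod 2 => D f ≠ f x)).card :=
  card_le_two_mul_card_filter_of_injective _ (· + h) (add_left_injective h)
    fun _ hf => ne_eval_add_of_folded hb hD (not_not.mp hf)

/-- If `E` is the long code of `x` (i.e. `E f = f x`) and `D` is folded over `(h, b)`
with `h x ≠ b`, then `D` and `E` differ on at least half of all coordinates. -/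
theorem longcode_folded_far (n : ℕ) (hn : 1 ≤ n) (x : Fin n → ZMod 2)
    (h : (Fin n → ZMod 2) → ZMod 2) (b : ZMod 2)
    (D : ((Fin n → ZMod 2) → ZMod 2) → ZMod 2)
    (hb : h x ≠ b)
    (hD : ∀ f : (Fin n → ZMod 2) → ZMod 2, D (f + h) = D f + b) :
    Fintype.card ((Fin n → ZMod 2) → ZMod 2) ≤
      2 * (Finset.univ.filter
        (fun f : (Fin n → ZMod 2) → ZMod 2 => D f ≠ f x)).card :=
  longcode_folded_far_general n x h b D hb hD
end

section
/- Let C be a set of words in {0,1}^N such that any two distinct words of C are at normalized Hamming distance exactly 1/2, and let 0 < δ ≤ 1/2. Then for any string A ∈ {0,1}^N, the number of words of C at normalized Hamming distance at most 1/2 − δ from A is at most 1/(2δ²) ≤ 4δ^(−2). -/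
open scoped Classical

private lemma zmod2_pm_mul (a b r : ZMod 2) :
    (if a = r then (1 : ℝ) else -1) * (if b = r then (1 : ℝ) else -1)
      = if a = b then 1 else -1 := by
  have hkey : ∀ a b r : ZMod 2, a ≠ r → b ≠ r → a = b := by decide
  by_cases h1 : a = r <;> by_cases h2 : b = r
  · have h : a = b := h1.trans h2.symm; simp [h1, h2, h]
  · have h : ¬ (r = b) := fun hh => h2 hh.symm
    simp [h1, h2, h]
  · have h : a ≠ b := fun h => h1 (h.trans h2); simp [h1, h2, h]
  · have h : a = b := hkey a b r h1 h2; simp [h1, h2, h]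

private lemma sum_pm_eq (N : ℕ) (c c' : Fin N → ZMod 2) :
    ∑ i, (if c i = c' i then (1 : ℝ) else -1) = N - 2 * hammingDist c c' := by
  classical
  have hne : (Finset.univ.filter fun i => ¬ c i = c' i).card = hammingDist c c' := rfl
  have hsplit : (Finset.univ.filter fun i => c i = c' i).card + hammingDist c c' = N := by
    have := Finset.card_filter_add_card_filter_not
      (s := (Finset.univ : Finset (Fin N))) (p := fun i => c i = c' i)
    simpa [hne] using this
  rw [Finset.sum_ite, Finset.sum_const, Finset.sum_const, hne]
  simp only [nsmul_eq_mul, mul_one, mul_neg_one]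
  have h1 : ((Finset.univ.filter fun i => c i = c' i).card : ℝ)
      = N - hammingDist c c' := by
    push_cast [← hsplit]; ring
  rw [h1]; ring

/-- List-decoding bound: if all pairwise distances in a code `C ⊆ {0,1}^N` equal
exactly `N/2`, then for `0 < δ ≤ 1/2` any string has at most `1/(2δ²)` codewords
within normalized distance `1/2 - δ`. -/
theorem list_decoding_bound (N : ℕ) (C : Finset (Fin N → ZMod 2)) (δ : ℝ)
    (hδ : 0 < δ) (hδ2 : δ ≤ 1 / 2)
    (hC : ∀ c₁ ∈ C, ∀ c₂ ∈ C, c₁ ≠ c₂ → (hammingDist c₁ c₂ : ℝ) = N / 2)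
    (A : Fin N → ZMod 2) :
    ((C.filter (fun c => (hammingDist A c : ℝ) ≤ (1 / 2 - δ) * N)).card : ℝ)
      ≤ 1 / (2 * δ ^ 2) := by
  classical
  set L := C.filter (fun c => (hammingDist A c : ℝ) ≤ (1 / 2 - δ) * N) with hLdef
  set k : ℕ := L.card with hk
  have hδsq : 0 < 2 * δ ^ 2 := by positivity
  -- trivial cases
  rcases Nat.eq_zero_or_pos k with hk0 | hkpos
  · rw [hk0]; simp only [Nat.cast_zero]; positivity
  rcases Nat.eq_zero_or_pos N with hN0 | hNpos
  · -- N = 0 : the type has a unique element, so k ≤ 1 ≤ 1/(2δ²)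
    subst hN0
    have hk1 : k ≤ 1 := by
      have : L.card ≤ Fintype.card (Fin 0 → ZMod 2) := Finset.card_le_univ L
      simpa using this
    calc (k : ℝ) ≤ 1 := by exact_mod_cast hk1
      _ ≤ 1 / (2 * δ ^ 2) := by
          rw [le_div_iff₀ hδsq]; nlinarith
  -- main case
  set x : (Fin N → ZMod 2) → Fin N → ℝ :=
    fun c i => if c i = A i then 1 else -1 with hx
  have hinner : ∀ c c' : Fin N → ZMod 2,
      ∑ i, x c i * x c' i = N - 2 * hammingDist c c' := by
    intro c c'
    have h : ∀ i, x c i * x c' i = if c i = c' i then (1 : ℝ) else -1 :=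
      fun i => zmod2_pm_mul (c i) (c' i) (A i)
    rw [Finset.sum_congr rfl fun i _ => h i, sum_pm_eq]
  have hLsub : ∀ c ∈ L, c ∈ C := fun c hc => (Finset.mem_filter.mp hc).1
  -- each codeword in L is well correlated with the all-ones vector
  have hcorr : ∀ c ∈ L, 2 * δ * N ≤ ∑ i, x c i := by
    intro c hc
    have hdist : (hammingDist A c : ℝ) ≤ (1 / 2 - δ) * N :=
      (Finset.mem_filter.mp hc).2
    have hsum : ∑ i, x c i = N - 2 * hammingDist c A := by
      have h : ∀ i, x c i = if c i = A i then (1 : ℝ) else -1 := fun i => rfl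
      rw [Finset.sum_congr rfl fun i _ => h i, sum_pm_eq]
    rw [hsum, hammingDist_comm]
    nlinarith [hdist]
  set S : Fin N → ℝ := fun i => ∑ c ∈ L, x c i with hS
  -- total correlation
  have hsumS : 2 * δ * N * k ≤ ∑ i, S i := by
    rw [hS]
    rw [Finset.sum_comm]
    calc 2 * δ * N * k = ∑ _c ∈ L, 2 * δ * N := by
          rw [Finset.sum_const]; push_cast; ring
      _ ≤ ∑ c ∈ L, ∑ i, x c i := Finset.sum_le_sum fun c hc => hcorr c hc
  -- norm of S
  have hnormS : ∑ i, S i ^ 2 = (k : ℝ) * N := by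
    have hsq : ∀ i, S i ^ 2 = ∑ c ∈ L, ∑ c' ∈ L, x c i * x c' i := by
      intro i
      rw [hS, sq, Finset.sum_mul_sum]
    rw [Finset.sum_congr rfl fun i _ => hsq i, Finset.sum_comm]
    have key : ∀ c ∈ L, ∑ i, ∑ c' ∈ L, x c i * x c' i = (N : ℝ) := by
      intro c hc
      rw [Finset.sum_comm]
      have heach : ∀ c' ∈ L, ∑ i, x c i * x c' i = if c' = c then (N : ℝ) else 0 := by
        intro c' hc'
        rw [hinner]
        by_cases h : c' = c
        · simp [h]
        · rw [hammingDist_comm, hC c' (hLsub c' hc') c (hLsub c hc) h]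
          simp [h]; ring
      rw [Finset.sum_congr rfl heach, Finset.sum_ite_eq' L c (fun _ => (N : ℝ))]
      simp [hc]
    rw [Finset.sum_congr rfl key, Finset.sum_const]
    push_cast; ring
  -- Cauchy–Schwarz
  have hCS : (∑ i, S i) ^ 2 ≤ (N : ℝ) * ((k : ℝ) * N) := by
    have := Finset.sum_mul_sq_le_sq_mul_sq Finset.univ (fun _ : Fin N => (1 : ℝ)) S
    simpa [hnormS] using this
  have hposN : (0 : ℝ) < N := by exact_mod_cast hNpos
  have hposk : (0 : ℝ) < k := by exact_mod_cast hkpos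
  have hLHS : (2 * δ * N * k) ^ 2 ≤ (N : ℝ) * ((k : ℝ) * N) := by
    have h0 : 0 ≤ 2 * δ * N * k := by positivity
    exact (pow_le_pow_left₀ h0 hsumS 2).trans hCS
  have h4 : 4 * δ ^ 2 * (k : ℝ) ^ 2 * (N : ℝ) ^ 2 ≤ (k : ℝ) * (N : ℝ) ^ 2 := by
    nlinarith [hLHS]
  have h5 : (k : ℝ) * (2 * δ ^ 2) ≤ 1 / 2 := by
    have hpos : (0 : ℝ) < (k : ℝ) * (N : ℝ) ^ 2 := by positivity
    nlinarith [h4, hpos]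
  rw [le_div_iff₀ hδsq]
  linarith
end

section
/- (Optimal split of test types in the 77/80 analysis.) Define Δ : [0, 1/2] → ℝ by Δ(x) = 3x − 6x² for 0 ≤ x ≤ 5/16, Δ(x) = 45/128 for 5/16 < x ≤ 45/128, and Δ(x) = x for 45/128 < x ≤ 1/2. Let k > 0 and set n₁ = 3k/40. Then for every x ∈ [0, 1/2], (n₁·Δ(x) + (3/56)·(k − 4n₁)·(1 − 2x))/k ≥ 3/80, with equality attained at x = 0 and at x = 45/128. -/
/-- The BLR rejection-probability lower bound `Δ`. -/
noncomputable def blrDelta (x : ℝ) : ℝ :=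
  if x ≤ 5 / 16 then 3 * x - 6 * x ^ 2
  else if x ≤ 45 / 128 then 45 / 128
  else x

/-- With `n₁ = 3k/40` (so `n₂ = k/10`, `n₃ = 3k/40`), the unsatisfied-fraction
expression is at least `3/80` for all `x ∈ [0, 1/2]`, with equality at `x = 0`
and `x = 45/128`. -/
theorem optimal_test_split (k : ℝ) (hk : 0 < k) :
    (∀ x ∈ Set.Icc (0 : ℝ) (1 / 2),
      3 / 80 ≤ ((3 * k / 40) * blrDelta x
        + (3 / 56) * (k - 4 * (3 * k / 40)) * (1 - 2 * x)) / k) ∧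
    ((3 * k / 40) * blrDelta 0
        + (3 / 56) * (k - 4 * (3 * k / 40)) * (1 - 2 * 0)) / k = 3 / 80 ∧
    ((3 * k / 40) * blrDelta (45 / 128)
        + (3 / 56) * (k - 4 * (3 * k / 40)) * (1 - 2 * (45 / 128))) / k
      = 3 / 80 := by
  have hk' : k ≠ 0 := ne_of_gt hk
  refine ⟨?_, ?_, ?_⟩
  · rintro x ⟨hx0, hx1⟩
    unfold blrDelta
    rw [le_div_iff₀ hk]
    split_ifs with h1 h2
    · nlinarith [mul_nonneg (mul_nonneg hk.le hx0) (show (0:ℝ) ≤ 1 - 3 * x by linarith)]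
    · nlinarith [mul_nonneg hk.le (show (0:ℝ) ≤ 45 / 128 - x by linarith)]
    · push_neg at h1 h2
      nlinarith
  · unfold blrDelta
    norm_num
    field_simp
    ring
  · unfold blrDelta
    norm_num
    field_simp
    ring
end
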